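/- For all complex z, w in the open unit disc: |1 - conj(z)·w|² ≤ 2(1-|z|)(1-|w|)(1+|z|)²(1+|w|)² + |z-w|²·(|z| + |w| + |z|·|w|)². -/

import Mathlib

/-!
With `a = ‖z‖`, `b = ‖w‖`, `s = ‖z - w‖` and `c = a + b + a b`, the identity
`‖1 - z̄ w‖² = (1 - a²)(1 - b²) + s²` turns the claim into a real inequality. Since
`1 + c = (1 + a)(1 + b)`, the difference of its two sides is `(1 + a)(1 + b)` times
`(1 - a)(1 - b)(2(1 + a)(1 + b) - 1) - s²(1 - c)`. This is clear when `c ≥ 1`; otherwise the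
triangle inequality `s ≤ a + b` reduces it to a polynomial inequality in `a + b` and `a b`.
-/

open ComplexConjugate

lemma Complex.norm_one_sub_conj_mul_sq (z w : ℂ) :
    ‖1 - conj z * w‖ ^ 2 = (1 - ‖z‖ ^ 2) * (1 - ‖w‖ ^ 2) + ‖z - w‖ ^ 2 := by
  simp only [Complex.sq_norm, Complex.normSq_apply, Complex.sub_re, Complex.sub_im,
    Complex.one_re, Complex.one_im, Complex.mul_re, Complex.mul_im,
    Complex.conj_re, Complex.conj_im]
  ring

lemma sq_mul_one_sub_le_of_le_add {a b s : ℝ} (ha₀ : 0 ≤ a) (hb₀ : 0 ≤ b) (ha₁ : a ≤ 1)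
    (hb₁ : b ≤ 1) (hs₀ : 0 ≤ s) (hs : s ≤ a + b) :
    s ^ 2 * (1 - (a + b + a * b)) ≤ (1 - a) * (1 - b) * (2 * (1 + a) * (1 + b) - 1) := by
  rcases le_or_gt (a + b + a * b) 1 with hc | hc
  · have hu : 0 ≤ 1 - (a + b) := by nlinarith [mul_nonneg ha₀ hb₀]
    calc s ^ 2 * (1 - (a + b + a * b)) ≤ (a + b) ^ 2 * (1 - (a + b)) :=
          mul_le_mul (pow_le_pow_left₀ hs₀ hs 2) (by nlinarith [mul_nonneg ha₀ hb₀])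
            (by linarith) (sq_nonneg _)
      _ ≤ (1 - (a + b)) * (1 + 2 * (a + b)) := by
          nlinarith [mul_nonneg hu (by nlinarith : 0 ≤ 1 + 2 * (a + b) - (a + b) ^ 2)]
      _ ≤ (1 - a) * (1 - b) * (2 * (1 + a) * (1 + b) - 1) := by
          nlinarith [mul_nonneg ha₀ hb₀, mul_nonneg (mul_nonneg ha₀ hb₀) (mul_nonneg ha₀ hb₀)]
  · calc s ^ 2 * (1 - (a + b + a * b)) ≤ 0 :=
          mul_nonpos_of_nonneg_of_nonpos (sq_nonneg s) (by linarith)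
      _ ≤ (1 - a) * (1 - b) * (2 * (1 + a) * (1 + b) - 1) :=
          mul_nonneg (mul_nonneg (sub_nonneg.2 ha₁) (sub_nonneg.2 hb₁))
            (by nlinarith [mul_nonneg ha₀ hb₀])

lemma one_sub_sq_mul_one_sub_sq_add_sq_le {a b s : ℝ} (ha₀ : 0 ≤ a) (hb₀ : 0 ≤ b) (ha₁ : a ≤ 1)
    (hb₁ : b ≤ 1) (hs₀ : 0 ≤ s) (hs : s ≤ a + b) :
    (1 - a ^ 2) * (1 - b ^ 2) + s ^ 2 ≤
      2 * (1 - a) * (1 - b) * (1 + a) ^ 2 * (1 + b) ^ 2 + s ^ 2 * (a + b + a * b) ^ 2 := by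
  have key := sq_mul_one_sub_le_of_le_add ha₀ hb₀ ha₁ hb₁ hs₀ hs
  have hfactor : 0 ≤ (1 + a) * (1 + b) := by positivity
  have hdiff : 2 * (1 - a) * (1 - b) * (1 + a) ^ 2 * (1 + b) ^ 2 + s ^ 2 * (a + b + a * b) ^ 2 -
      ((1 - a ^ 2) * (1 - b ^ 2) + s ^ 2) = (1 + a) * (1 + b) *
        ((1 - a) * (1 - b) * (2 * (1 + a) * (1 + b) - 1) - s ^ 2 * (1 - (a + b + a * b))) := by
    ring
  linarith [mul_nonneg hfactor (sub_nonneg.2 key)]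

theorem stmt_5 (z w : ℂ) (hz : ‖z‖ < 1) (hw : ‖w‖ < 1) :
    ‖1 - (starRingEnd ℂ) z * w‖ ^ 2 ≤
      2 * (1 - ‖z‖) * (1 - ‖w‖) *
        (1 + ‖z‖) ^ 2 * (1 + ‖w‖) ^ 2 +
      ‖z - w‖ ^ 2 *
        (‖z‖ + ‖w‖ + ‖z‖ * ‖w‖) ^ 2 := by
  rw [Complex.norm_one_sub_conj_mul_sq]
  exact one_sub_sq_mul_one_sub_sq_add_sq_le (norm_nonneg z) (norm_nonneg w) hz.le hw.le
    (norm_nonneg _) (norm_sub_le z w)
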